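/- Let G be a finite group acting by ring automorphisms on a commutative ring A with |G| invertible in A, and let J ⊆ A be a G-invariant ideal (i.e., g • J = J for all g ∈ G). Then the natural ring homomorphism A^G/(J ∩ A^G) → (A/J)^G is an isomorphism. -/

import Mathlib

/-!
Averaging over `G` (the Reynolds operator `a ↦ |G|⁻¹ ∑_g g • a`) lands in `A^G`, and
`reynolds a - a = |G|⁻¹ ∑_g (g • a - a)`. So if the class of `a` in `A/J` is invariant, i.e. every
`g • a - a` lies in `J`, then the invariant element `reynolds a` has the same class as `a`.
-/

/-- The subring of `G`-invariant elements of `A`. -/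
def fixedSubring (G A : Type*) [Monoid G] [CommRing A] [MulSemiringAction G A] : Subring A where
  carrier := {a | ∀ g : G, g • a = a}
  mul_mem' := by intro a b ha hb g; rw [smul_mul', ha g, hb g]
  one_mem' := fun g => smul_one g
  add_mem' := by intro a b ha hb g; rw [smul_add, ha g, hb g]
  zero_mem' := fun g => smul_zero g
  neg_mem' := by intro a ha g; rw [smul_neg, ha g]

theorem smul_invOf_natCast {M A : Type*} [Monoid M] [Semiring A] [MulSemiringAction M A]
    (g : M) (n : ℕ) [Invertible (n : A)] : g • ⅟(n : A) = ⅟(n : A) := by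
  have hn : g • (n : A) = n := map_natCast (MulSemiringAction.toRingHom M A g) n
  refine (invOf_eq_right_inv ?_).symm
  calc (n : A) * g • ⅟(n : A) = g • (n : A) * g • ⅟(n : A) := by rw [hn]
    _ = 1 := by rw [← smul_mul', mul_invOf_self, smul_one]

theorem sum_smul_mem_fixedSubring {G A : Type*} [Group G] [Fintype G] [CommRing A]
    [MulSemiringAction G A] (a : A) : ∑ g : G, g • a ∈ fixedSubring G A := by
  intro h
  rw [Finset.smul_sum]
  simp_rw [smul_smul]
  exact Fintype.sum_equiv (Equiv.mulLeft h) _ _ fun _ => rfl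

section Reynolds

variable {G A : Type*} [Group G] [Fintype G] [CommRing A] [MulSemiringAction G A]
  [Invertible (Fintype.card G : A)]

variable (G) in
noncomputable def reynolds (a : A) : A :=
  ⅟(Fintype.card G : A) * ∑ g : G, g • a

theorem reynolds_mem_fixedSubring (a : A) : reynolds G a ∈ fixedSubring G A := by
  intro g
  rw [reynolds, smul_mul', smul_invOf_natCast, sum_smul_mem_fixedSubring a g]

theorem reynolds_sub_self (a : A) :
    reynolds G a - a = ⅟(Fintype.card G : A) * ∑ g : G, (g • a - a) := by
  rw [reynolds, Finset.sum_sub_distrib, mul_sub, Finset.sum_const, Finset.card_univ,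
    nsmul_eq_mul, ← mul_assoc, invOf_mul_self, one_mul]

theorem reynolds_sub_self_mem {J : Ideal A} {a : A} (ha : ∀ g : G, g • a - a ∈ J) :
    reynolds G a - a ∈ J := by
  rw [reynolds_sub_self]
  exact J.mul_mem_left _ (J.sum_mem fun g _ => ha g)

end Reynolds

theorem invariants_mod_invariant_ideal_general (G A : Type*) [Group G] [Fintype G] [CommRing A]
    [MulSemiringAction G A] [Invertible ((Fintype.card G : A))]
    (J : Ideal A) :
    (∀ x : A ⧸ J, (∀ a : A, Ideal.Quotient.mk J a = x → ∀ g : G, g • a - a ∈ J) →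
      ∃ b ∈ fixedSubring G A, Ideal.Quotient.mk J b = x) ∧
    (∀ b ∈ fixedSubring G A, (Ideal.Quotient.mk J b = 0 ↔ b ∈ J)) := by
  refine ⟨fun x hx => ?_, fun b _ => Ideal.Quotient.eq_zero_iff_mem⟩
  obtain ⟨a, rfl⟩ := Ideal.Quotient.mk_surjective x
  exact ⟨reynolds G a, reynolds_mem_fixedSubring a,
    Ideal.Quotient.eq.2 (reynolds_sub_self_mem (hx a rfl))⟩

/-- Nagata's fundamental lemma (i): for a `G`-invariant ideal `J ⊆ A`, the natural map
`A^G/(J ∩ A^G) → (A/J)^G` is an isomorphism, i.e. the map `A^G → (A/J)^G` is surjective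
(every `G`-invariant class in `A/J` — one all of whose representatives `a` satisfy
`g • a - a ∈ J` — lifts to an invariant element of `A`) and has kernel `J ∩ A^G`. -/
theorem invariants_mod_invariant_ideal (G A : Type*) [Group G] [Fintype G] [CommRing A]
    [MulSemiringAction G A] [Invertible ((Fintype.card G : A))]
    (J : Ideal A) (hJ : ∀ (g : G), ∀ a ∈ J, g • a ∈ J) :
    (∀ x : A ⧸ J, (∀ a : A, Ideal.Quotient.mk J a = x → ∀ g : G, g • a - a ∈ J) →
      ∃ b ∈ fixedSubring G A, Ideal.Quotient.mk J b = x) ∧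
    (∀ b ∈ fixedSubring G A, (Ideal.Quotient.mk J b = 0 ↔ b ∈ J)) :=
  invariants_mod_invariant_ideal_general G A J
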